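/- Let H, E ∈ ℝ^{n×K} with H of full rank K, set Ĥ = H + E, and let α > 0 satisfy Σ_{j=1}^{K} ‖E_{·,j}‖² ≤ α/2, where E_{·,j} denotes the j-th column of E. Then the following four inequalities hold: (i) ρ_min(ĤᵀĤ + αI_K) ≥ ρ_min(HᵀH)/2; (ii) ρ(ĤᵀĤ − HᵀH) ≤ 2·(α + ρ(HᵀH)), where for a symmetric matrix M, ρ(M) denotes sup over unit vectors x of |xᵀMx|; (iii) ρ(EᵀE) ≤ α/2; (iv) ρ(ĤᵀĤ − HᵀH)² / ρ_min(HᵀH + αI_K)² ≤ 32·Cond(HᵀH)². -/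

import Mathlib

open MeasureTheory ProbabilityTheory Matrix

/-- Orthogonal projection onto the column span of `M` (for `M` of full column rank). -/
noncomputable def projMat {n K : ℕ} (M : Matrix (Fin n) (Fin K) ℝ) :
    Matrix (Fin n) (Fin n) ℝ :=
  M * (Mᵀ * M)⁻¹ * Mᵀ

/-- Ridge-regularized projection operator with parameter `α`. -/
noncomputable def projMatReg {n K : ℕ} (M : Matrix (Fin n) (Fin K) ℝ) (α : ℝ) :
    Matrix (Fin n) (Fin n) ℝ :=
  M * (Mᵀ * M + α • (1 : Matrix (Fin K) (Fin K) ℝ))⁻¹ * Mᵀ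

/-- `ℓ²`-operator (spectral) norm of a square real matrix. -/
noncomputable def opNorm {n : ℕ} (M : Matrix (Fin n) (Fin n) ℝ) : ℝ :=
  ‖LinearMap.toContinuousLinearMap (Matrix.toEuclideanLin M)‖

/-- Largest real eigenvalue of a square matrix (`ρ`). -/
noncomputable def rhoMax {K : ℕ} (A : Matrix (Fin K) (Fin K) ℝ) : ℝ :=
  sSup (spectrum ℝ A)

/-- Smallest real eigenvalue of a square matrix (`ρ_min`). -/
noncomputable def rhoMin {K : ℕ} (A : Matrix (Fin K) (Fin K) ℝ) : ℝ :=
  sInf (spectrum ℝ A)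

/-- Condition number `Cond(A) = ρ(A)/ρ_min(A)`. -/
noncomputable def condNum {K : ℕ} (A : Matrix (Fin K) (Fin K) ℝ) : ℝ :=
  rhoMax A / rhoMin A

/-- For a symmetric matrix `M`, `ρ(M) = sup_{‖x‖ = 1} |xᵀ M x|`. -/
noncomputable def rhoAbs {K : ℕ} (M : Matrix (Fin K) (Fin K) ℝ) : ℝ :=
  sSup {r | ∃ x : Fin K → ℝ, x ⬝ᵥ x = 1 ∧ r = |x ⬝ᵥ (M *ᵥ x)|}

/-- The family `Z i`, `i : ι`, consists of i.i.d. standard gaussian random variables. -/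
def IsStdGaussianFamily {Ω : Type} [MeasureSpace Ω] {ι : Type} [Fintype ι]
    (Z : Ω → ι → ℝ) : Prop :=
  (∀ i, Measurable fun ω => Z ω i) ∧
  iIndepFun (fun i ω => Z ω i) ℙ ∧
  ∀ i, Measure.map (fun ω => Z ω i) ℙ = gaussianReal 0 1

/-!
Everything is read off Rayleigh quotients: the extreme eigenvalues of a symmetric matrix are the
extreme values of `xᵀ A x` on unit vectors, and for a unit vector `x` we have
`xᵀ ĤᵀĤ x = ‖Hx + Ex‖²` with `‖Ex‖² ≤ ∑ᵢⱼ Eᵢⱼ² ≤ α/2` by Cauchy–Schwarz. Bounds (i) and (ii)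
then follow from `‖a + b‖² ≤ 2‖a‖² + 2‖b‖²`, and (iv) from (ii) together with
`ρ_min(HᵀH + αI) ≥ ρ_min(HᵀH) + α` and the mediant bound `(α + ρ)/(α + q) ≤ ρ/q` for `0 < q ≤ ρ`.
-/

namespace Matrix

section DotProduct

variable {m n : Type*} [Fintype m]

theorem exists_dotProduct_self_eq_one [Fintype n] [Nonempty n] : ∃ x : n → ℝ, x ⬝ᵥ x = 1 := by
  classical
  exact ⟨Pi.single (Classical.arbitrary n) 1, by simp⟩

theorem dotProduct_add_self_le [Fintype n] (a b : n → ℝ) :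
    (a + b) ⬝ᵥ (a + b) ≤ 2 * (a ⬝ᵥ a) + 2 * (b ⬝ᵥ b) := by
  have h := dotProduct_self_star_nonneg (a - b)
  simp only [star_trivial, dotProduct_add, add_dotProduct, dotProduct_sub, sub_dotProduct,
    dotProduct_comm b a] at h ⊢
  linarith

theorem dotProduct_mulVec_self_le [Fintype n] (E : Matrix m n ℝ) (x : n → ℝ) :
    (E *ᵥ x) ⬝ᵥ (E *ᵥ x) ≤ (∑ j, ∑ i, E i j ^ 2) * (x ⬝ᵥ x) := by
  rw [Finset.sum_comm, Finset.sum_mul]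
  refine Finset.sum_le_sum fun i _ => ?_
  simpa [mulVec, dotProduct, sq] using Finset.sum_mul_sq_le_sq_mul_sq Finset.univ (E i) x

theorem dotProduct_transpose_mul_self_mulVec [Fintype n] {R : Type*} [CommSemiring R]
    (M : Matrix m n R) (x : n → R) : x ⬝ᵥ ((Mᵀ * M) *ᵥ x) = (M *ᵥ x) ⬝ᵥ (M *ᵥ x) := by
  rw [← mulVec_mulVec, dotProduct_mulVec, vecMul_transpose]

theorem dotProduct_add_smul_one_mulVec [Fintype n] [DecidableEq n] {R : Type*} [CommSemiring R]
    (A : Matrix n n R) (c : R) (x : n → R) :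
    x ⬝ᵥ ((A + c • 1) *ᵥ x) = x ⬝ᵥ (A *ᵥ x) + c * (x ⬝ᵥ x) := by
  rw [add_mulVec, smul_mulVec, one_mulVec, dotProduct_add, dotProduct_smul, smul_eq_mul]

theorem isHermitian_transpose_mul_self (M : Matrix m n ℝ) : (Mᵀ * M).IsHermitian := by
  simpa using isHermitian_conjTranspose_mul_self M

theorem IsHermitian.add_smul_one [DecidableEq n] {A : Matrix n n ℝ} (hA : A.IsHermitian) (c : ℝ) :
    (A + c • 1).IsHermitian :=
  hA.add (isHermitian_one.smul (IsSelfAdjoint.all c))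

theorem posDef_transpose_mul_self_of_rank_eq [Fintype n] [DecidableEq n] {M : Matrix m n ℝ}
    (hM : M.rank = Fintype.card n) : (Mᵀ * M).PosDef := by
  have hker : Module.finrank ℝ (LinearMap.ker M.mulVecLin) = 0 := by
    have := LinearMap.finrank_range_add_finrank_ker M.mulVecLin
    rw [← rank, hM, Module.finrank_fintype_fun_eq_card] at this
    omega
  have hinj : Function.Injective M.mulVec :=
    LinearMap.ker_eq_bot.mp (Submodule.finrank_eq_zero.mp hker)
  simpa using PosDef.conjTranspose_mul_self M hinj

end DotProduct

section Rayleigh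

variable {n : Type*} [Fintype n] [DecidableEq n] {A : Matrix n n ℝ}

theorem IsHermitian.posSemidef_sub_smul_one (hA : A.IsHermitian) {c : ℝ}
    (hc : ∀ i, c ≤ hA.eigenvalues i) : (A - c • 1).PosSemidef := by
  have hshift : A - c • 1 = Unitary.conjStarAlgAut ℝ _ hA.eigenvectorUnitary
      (diagonal fun i => hA.eigenvalues i - c) := by
    conv_lhs => rw [hA.spectral_theorem]
    rw [← diagonal_sub, map_sub, ← smul_one_eq_diagonal, map_smul, map_one]
    simp
  rw [hshift]
  simp [Unitary.isUnit_coe.posSemidef_star_right_conjugate_iff, hc]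

theorem IsHermitian.mul_dotProduct_self_le (hA : A.IsHermitian) {c : ℝ}
    (hc : ∀ i, c ≤ hA.eigenvalues i) (x : n → ℝ) : c * (x ⬝ᵥ x) ≤ x ⬝ᵥ (A *ᵥ x) := by
  have h := (hA.posSemidef_sub_smul_one hc).dotProduct_mulVec_nonneg x
  rw [star_trivial, sub_mulVec, smul_mulVec, one_mulVec, dotProduct_sub, dotProduct_smul,
    smul_eq_mul] at h
  linarith

theorem IsHermitian.exists_dotProduct_mulVec_eq_eigenvalues (hA : A.IsHermitian) (i : n) :
    ∃ x : n → ℝ, x ⬝ᵥ x = 1 ∧ x ⬝ᵥ (A *ᵥ x) = hA.eigenvalues i := by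
  have hunit : ⇑(hA.eigenvectorBasis i) ⬝ᵥ ⇑(hA.eigenvectorBasis i) = 1 := by
    have h := real_inner_self_eq_norm_sq (hA.eigenvectorBasis i)
    rw [hA.eigenvectorBasis.orthonormal.1 i, EuclideanSpace.inner_eq_star_dotProduct] at h
    simpa using h
  refine ⟨_, hunit, ?_⟩
  rw [hA.mulVec_eigenvectorBasis, dotProduct_smul, hunit, smul_eq_mul, mul_one]

end Rayleigh

section ExtremeEigenvalues

variable {K : ℕ} {A : Matrix (Fin K) (Fin K) ℝ}

theorem IsHermitian.rhoMin_le_eigenvalues (hA : A.IsHermitian) (i : Fin K) :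
    rhoMin A ≤ hA.eigenvalues i :=
  csInf_le Matrix.finite_real_spectrum.bddBelow (hA.eigenvalues_mem_spectrum_real i)

theorem IsHermitian.exists_eigenvalues_eq_rhoMin [Nonempty (Fin K)] (hA : A.IsHermitian) :
    ∃ i, hA.eigenvalues i = rhoMin A := by
  rw [← Set.mem_range, ← hA.spectrum_real_eq_range_eigenvalues, rhoMin]
  refine Set.Nonempty.csInf_mem ?_ Matrix.finite_real_spectrum
  exact ⟨_, hA.eigenvalues_mem_spectrum_real (Classical.arbitrary _)⟩

theorem IsHermitian.rhoMin_le_dotProduct_mulVec (hA : A.IsHermitian) {x : Fin K → ℝ}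
    (hx : x ⬝ᵥ x = 1) : rhoMin A ≤ x ⬝ᵥ (A *ᵥ x) := by
  simpa [hx] using hA.mul_dotProduct_self_le hA.rhoMin_le_eigenvalues x

theorem IsHermitian.le_rhoMin [Nonempty (Fin K)] (hA : A.IsHermitian) {c : ℝ}
    (h : ∀ x : Fin K → ℝ, x ⬝ᵥ x = 1 → c ≤ x ⬝ᵥ (A *ᵥ x)) : c ≤ rhoMin A := by
  obtain ⟨i, hi⟩ := hA.exists_eigenvalues_eq_rhoMin
  obtain ⟨x, hx, hxA⟩ := hA.exists_dotProduct_mulVec_eq_eigenvalues i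
  exact hi ▸ hxA ▸ h x hx

theorem PosDef.rhoMin_pos [Nonempty (Fin K)] (hA : A.PosDef) : 0 < rhoMin A := by
  obtain ⟨i, hi⟩ := hA.isHermitian.exists_eigenvalues_eq_rhoMin
  exact hi ▸ hA.eigenvalues_pos i

theorem rhoMax_eq_neg_rhoMin_neg (A : Matrix (Fin K) (Fin K) ℝ) : rhoMax A = -rhoMin (-A) := by
  rw [rhoMin, ← spectrum.neg_eq, Real.sInf_neg, neg_neg, rhoMax]

theorem IsHermitian.dotProduct_mulVec_le_rhoMax (hA : A.IsHermitian) {x : Fin K → ℝ}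
    (hx : x ⬝ᵥ x = 1) : x ⬝ᵥ (A *ᵥ x) ≤ rhoMax A := by
  have h := hA.neg.rhoMin_le_dotProduct_mulVec hx
  rw [neg_mulVec, dotProduct_neg] at h
  rw [rhoMax_eq_neg_rhoMin_neg]
  linarith

theorem IsHermitian.rhoMax_le [Nonempty (Fin K)] (hA : A.IsHermitian) {c : ℝ}
    (h : ∀ x : Fin K → ℝ, x ⬝ᵥ x = 1 → x ⬝ᵥ (A *ᵥ x) ≤ c) : rhoMax A ≤ c := by
  rw [rhoMax_eq_neg_rhoMin_neg, neg_le]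
  refine hA.neg.le_rhoMin fun x hx => ?_
  rw [neg_mulVec, dotProduct_neg]
  exact neg_le_neg (h x hx)

theorem IsHermitian.rhoMin_le_rhoMax [Nonempty (Fin K)] (hA : A.IsHermitian) :
    rhoMin A ≤ rhoMax A := by
  obtain ⟨x, hx⟩ := exists_dotProduct_self_eq_one (n := Fin K)
  exact (hA.rhoMin_le_dotProduct_mulVec hx).trans (hA.dotProduct_mulVec_le_rhoMax hx)

theorem rhoAbs_nonneg (M : Matrix (Fin K) (Fin K) ℝ) : 0 ≤ rhoAbs M :=
  Real.sSup_nonneg fun _ ⟨_, _, hr⟩ => hr ▸ abs_nonneg _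

theorem rhoAbs_le [Nonempty (Fin K)] {M : Matrix (Fin K) (Fin K) ℝ} {c : ℝ}
    (h : ∀ x : Fin K → ℝ, x ⬝ᵥ x = 1 → |x ⬝ᵥ (M *ᵥ x)| ≤ c) : rhoAbs M ≤ c := by
  obtain ⟨x, hx⟩ := exists_dotProduct_self_eq_one (n := Fin K)
  exact csSup_le ⟨_, x, hx, rfl⟩ fun _ ⟨y, hy, hr⟩ => hr ▸ h y hy

end ExtremeEigenvalues

end Matrix

section Perturbation

variable {m : Type*} [Fintype m] {K : ℕ} [Nonempty (Fin K)] (H E : Matrix m (Fin K) ℝ) {α : ℝ}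

theorem rhoMin_transpose_mul_self_div_two_le
    (hE : ∀ x : Fin K → ℝ, x ⬝ᵥ x = 1 → (E *ᵥ x) ⬝ᵥ (E *ᵥ x) ≤ α / 2) :
    rhoMin (Hᵀ * H) / 2 ≤ rhoMin ((H + E)ᵀ * (H + E) + α • 1) := by
  refine ((isHermitian_transpose_mul_self _).add_smul_one α).le_rhoMin fun x hx => ?_
  have hHx := (isHermitian_transpose_mul_self H).rhoMin_le_dotProduct_mulVec hx
  rw [dotProduct_transpose_mul_self_mulVec] at hHx
  rw [dotProduct_add_smul_one_mulVec, dotProduct_transpose_mul_self_mulVec, add_mulVec, hx]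
  -- `Hx = (Hx + Ex) - Ex`, so `‖Hx‖² ≤ 2‖Hx + Ex‖² + 2‖Ex‖²`
  have htri := dotProduct_add_self_le (H *ᵥ x + E *ᵥ x) (-(E *ᵥ x))
  rw [add_neg_cancel_right, neg_dotProduct_neg] at htri
  have hEx := hE x hx
  have hEx₀ := dotProduct_self_star_nonneg (E *ᵥ x)
  rw [star_trivial] at hEx₀
  linarith

theorem rhoAbs_transpose_mul_self_add_sub_le
    (hE : ∀ x : Fin K → ℝ, x ⬝ᵥ x = 1 → (E *ᵥ x) ⬝ᵥ (E *ᵥ x) ≤ α / 2) :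
    rhoAbs ((H + E)ᵀ * (H + E) - Hᵀ * H) ≤ α + rhoMax (Hᵀ * H) := by
  refine rhoAbs_le fun x hx => ?_
  have hHx := (isHermitian_transpose_mul_self H).dotProduct_mulVec_le_rhoMax hx
  rw [dotProduct_transpose_mul_self_mulVec] at hHx
  rw [sub_mulVec, dotProduct_sub, dotProduct_transpose_mul_self_mulVec,
    dotProduct_transpose_mul_self_mulVec, add_mulVec, abs_le]
  have htri := dotProduct_add_self_le (H *ᵥ x) (E *ᵥ x)
  have hEx := hE x hx
  have hEx₀ := dotProduct_self_star_nonneg (E *ᵥ x)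
  have hHEx₀ := dotProduct_self_star_nonneg (H *ᵥ x + E *ᵥ x)
  rw [star_trivial] at hEx₀ hHEx₀
  constructor <;> linarith

end Perturbation

theorem div_le_div_of_le_add_of_add_le {r m q ρ α : ℝ} (hr : r ≤ α + ρ)
    (hm : q + α ≤ m) (hq : 0 < q) (hqρ : q ≤ ρ) (hα : 0 ≤ α) : r / m ≤ ρ / q := by
  rw [div_le_div_iff₀ (by linarith) hq]
  linarith [mul_le_mul_of_nonneg_right hr hq.le, mul_le_mul_of_nonneg_right hqρ hα,
    mul_le_mul_of_nonneg_left hm (hq.le.trans hqρ)]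

/-- Eigenvalue controls for the regularized Gram matrix (Proposition `EigenControl`). -/
theorem regularized_eigen_control (n K : ℕ) (H E : Matrix (Fin n) (Fin K) ℝ)
    (hH : H.rank = K) (α : ℝ) (hα : 0 < α)
    (hE : ∑ j, ∑ i, (E i j)^2 ≤ α / 2) :
    rhoMin ((H + E)ᵀ * (H + E) + α • (1 : Matrix (Fin K) (Fin K) ℝ)) ≥
        rhoMin (Hᵀ * H) / 2 ∧
      rhoAbs ((H + E)ᵀ * (H + E) - Hᵀ * H) ≤ 2 * (α + rhoMax (Hᵀ * H)) ∧
      rhoMax (Eᵀ * E) ≤ α / 2 ∧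
      (rhoAbs ((H + E)ᵀ * (H + E) - Hᵀ * H))^2 /
          (rhoMin (Hᵀ * H + α • (1 : Matrix (Fin K) (Fin K) ℝ)))^2 ≤
        32 * (condNum (Hᵀ * H))^2 := by
  rcases isEmpty_or_nonempty (Fin K) with hK | hK
  · -- all four quantities are `sInf ∅ = sSup ∅ = 0`
    simpa [rhoMin, rhoMax, rhoAbs, condNum, spectrum.of_subsingleton, dotProduct] using
      ⟨hα.le, (half_pos hα).le⟩
  have hEx : ∀ x : Fin K → ℝ, x ⬝ᵥ x = 1 → (E *ᵥ x) ⬝ᵥ (E *ᵥ x) ≤ α / 2 := fun x hx =>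
    (dotProduct_mulVec_self_le E x).trans (by rwa [hx, mul_one])
  have hA := isHermitian_transpose_mul_self H
  have hq : 0 < rhoMin (Hᵀ * H) :=
    (posDef_transpose_mul_self_of_rank_eq (by rwa [Fintype.card_fin])).rhoMin_pos
  have hqρ := hA.rhoMin_le_rhoMax
  have hdiff := rhoAbs_transpose_mul_self_add_sub_le H E hEx
  have hm : rhoMin (Hᵀ * H) + α ≤ rhoMin (Hᵀ * H + α • 1) :=
    (hA.add_smul_one α).le_rhoMin fun x hx => by
      rw [dotProduct_add_smul_one_mulVec, hx, mul_one]
      linarith [hA.rhoMin_le_dotProduct_mulVec hx]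
  have hratio := div_le_div_of_le_add_of_add_le hdiff hm hq hqρ hα.le
  refine ⟨rhoMin_transpose_mul_self_div_two_le H E hEx, by linarith,
    (isHermitian_transpose_mul_self E).rhoMax_le fun x hx =>
      (dotProduct_transpose_mul_self_mulVec E x).trans_le (hEx x hx), ?_⟩
  rw [← div_pow, condNum]
  calc _ ≤ (rhoMax (Hᵀ * H) / rhoMin (Hᵀ * H)) ^ 2 :=
        pow_le_pow_left₀ (div_nonneg (rhoAbs_nonneg _) (by linarith)) hratio 2
    _ ≤ _ := le_mul_of_one_le_left (sq_nonneg _) (by norm_num)
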